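/- arXiv:2303.00442 — 4 statements merged into one kernel-verified Lean document; each statement's English description precedes it below -/
import Mathlib

section
/- Let d ≥ 1 be an integer, ρ > 0 a real number, and L : Fin d → ℝ a family of real numbers. Then the value (1/d)·Σ_a L_a + sqrt(ρ · Var(L)) is the greatest element of the set { Σ_a q_a · L_a : q ∈ Q_ρ }; that is, the maximum of the weighted loss Σ_a q_a·L_a over the uncertainty set Q_ρ is attained and equals the group-balanced average loss plus sqrt(ρ) times the square root of the groupwise variance. -/
open Finset

/-- The mean of a finite family of reals. -/
noncomputable def famMean {d : ℕ} (x : Fin d → ℝ) : ℝ := (1 / (d : ℝ)) * ∑ i, x i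

/-- The variance of a finite family of reals. -/
noncomputable def famVar {d : ℕ} (x : Fin d → ℝ) : ℝ :=
  (1 / (d : ℝ)) * ∑ i, (x i - famMean x) ^ 2

/-- The χ²-divergence uncertainty set of radius `ρ` around the uniform vector,
without a nonnegativity constraint (entries may be negative). -/
def uncertaintySet (d : ℕ) (ρ : ℝ) : Set (Fin d → ℝ) :=
  {q | ∑ a, q a = 1 ∧ ∑ a, (1 / (d : ℝ)) * ((d : ℝ) * q a - 1) ^ 2 ≤ ρ}

theorem dro_max_eq_mean_add_sqrt_var (d : ℕ) (hd : 1 ≤ d) (ρ : ℝ) (hρ : 0 < ρ)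
    (L : Fin d → ℝ) :
    IsGreatest {v : ℝ | ∃ q ∈ uncertaintySet d ρ, v = ∑ a, q a * L a}
      ((1 / (d : ℝ)) * ∑ a, L a + Real.sqrt (ρ * famVar L)) := by
  have hd0 : (0:ℝ) < (d:ℝ) := by exact_mod_cast hd
  have hdne : (d:ℝ) ≠ 0 := ne_of_gt hd0
  set m := famMean L with hm
  have hsum0 : ∑ a, (L a - m) = 0 := by
    simp only [Finset.sum_sub_distrib, Finset.sum_const, Finset.card_univ,
      Fintype.card_fin, nsmul_eq_mul, hm, famMean]
    field_simp
    ring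
  have hS : ∑ a, (L a - m) ^ 2 = (d:ℝ) * famVar L := by
    rw [famVar, ← hm]; field_simp
  have hVnn : 0 ≤ famVar L := by
    rw [famVar]
    exact mul_nonneg (by positivity) (Finset.sum_nonneg fun i _ => sq_nonneg _)
  have hmean : (1 / (d:ℝ)) * ∑ a, L a = m := rfl
  constructor
  · -- membership: the max is attained
    rcases eq_or_lt_of_le hVnn with hV0 | hV
    · refine ⟨fun _ => 1 / (d:ℝ), ⟨?_, ?_⟩, ?_⟩
      · simp [Finset.sum_const, Finset.card_univ, mul_one_div]
        field_simp
      · have h : ∀ a : Fin d, (1/(d:ℝ)) * ((d:ℝ) * (1/(d:ℝ)) - 1) ^ 2 = 0 := by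
          intro a; field_simp; ring
        rw [Finset.sum_congr rfl fun a _ => h a, Finset.sum_const, smul_zero]
        exact hρ.le
      · rw [← hV0, mul_zero, Real.sqrt_zero, add_zero, ← Finset.mul_sum]
    · set V := famVar L with hV'
      have hVne : V ≠ 0 := ne_of_gt hV
      set c : ℝ := Real.sqrt (ρ / V) with hc
      have hc2 : c ^ 2 = ρ / V := Real.sq_sqrt (by positivity)
      refine ⟨fun a => 1 / (d:ℝ) + c * (L a - m) / (d:ℝ), ⟨?_, ?_⟩, ?_⟩
      · rw [Finset.sum_add_distrib]
        have h1 : ∑ a : Fin d, c * (L a - m) / (d:ℝ) = (c / (d:ℝ)) * ∑ a, (L a - m) := by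
          rw [Finset.mul_sum]; exact Finset.sum_congr rfl fun a _ => by ring
        rw [h1, hsum0, mul_zero, add_zero]
        simp [Finset.sum_const, Finset.card_univ, mul_one_div]
        field_simp
      · have h2 : ∀ a : Fin d, (1/(d:ℝ)) * ((d:ℝ) * (1/(d:ℝ) + c * (L a - m)/(d:ℝ)) - 1) ^ 2
            = (c ^ 2 / (d:ℝ)) * (L a - m) ^ 2 := by
          intro a; field_simp; ring
        rw [Finset.sum_congr rfl fun a _ => h2 a, ← Finset.mul_sum, hS, hc2]
        apply le_of_eq
        field_simp
      · have h3 : ∀ a : Fin d, (1/(d:ℝ) + c * (L a - m)/(d:ℝ)) * L a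
            = (1/(d:ℝ)) * L a + (c/(d:ℝ)) * ((L a - m)^2 + m * (L a - m)) := by
          intro a; field_simp; ring
        rw [Finset.sum_congr rfl fun a _ => h3 a, Finset.sum_add_distrib,
          ← Finset.mul_sum, ← Finset.mul_sum, Finset.sum_add_distrib, ← Finset.mul_sum,
          hsum0, hS, mul_zero, add_zero]
        have h4 : c * ((d:ℝ) * V) / (d:ℝ) = c * V := by field_simp
        have h5 : c * V = Real.sqrt (ρ * V) := by
          rw [hc, ← Real.sqrt_sq hVnn, ← Real.sqrt_mul (by positivity)]
          congr 1
          field_simp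
          ring
          rw [Real.sq_sqrt (by positivity)]
        rw [← h5]
        field_simp
  · -- upper bound
    rintro v ⟨q, ⟨hq1, hq2⟩, rfl⟩
    have expand : ∑ a, (q a - 1/(d:ℝ)) * (L a - m) = (∑ a, q a * L a) - m := by
      have h1 : ∀ a : Fin d, (q a - 1/(d:ℝ)) * (L a - m)
          = (q a * L a - m * q a) - (1/(d:ℝ)) * (L a - m) := fun a => by ring
      rw [Finset.sum_congr rfl fun a _ => h1 a, Finset.sum_sub_distrib,
        Finset.sum_sub_distrib, ← Finset.mul_sum, ← Finset.mul_sum, hq1, hsum0]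
      ring
    set A := ∑ a, (q a - 1/(d:ℝ)) * (L a - m) with hA
    have hq2' : ∑ a, (q a - 1/(d:ℝ)) ^ 2 ≤ ρ / (d:ℝ) := by
      have h1 : ∀ a : Fin d, (1/(d:ℝ)) * ((d:ℝ) * q a - 1) ^ 2
          = (d:ℝ) * (q a - 1/(d:ℝ)) ^ 2 := by intro a; field_simp
      rw [Finset.sum_congr rfl fun a _ => h1 a, ← Finset.mul_sum] at hq2
      rw [le_div_iff₀ hd0, mul_comm]
      exact hq2
    have hCS : A ^ 2 ≤ ρ * famVar L := by
      calc A ^ 2 ≤ (∑ a, (q a - 1/(d:ℝ)) ^ 2) * ∑ a, (L a - m) ^ 2 :=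
            Finset.sum_mul_sq_le_sq_mul_sq _ _ _
        _ ≤ (ρ / (d:ℝ)) * ((d:ℝ) * famVar L) := by
            rw [hS]
            exact mul_le_mul_of_nonneg_right hq2' (by positivity)
        _ = ρ * famVar L := by field_simp
    have hAle : A ≤ Real.sqrt (ρ * famVar L) := by
      calc A ≤ |A| := le_abs_self A
        _ = Real.sqrt (A ^ 2) := (Real.sqrt_sq_eq_abs A).symm
        _ ≤ Real.sqrt (ρ * famVar L) := Real.sqrt_le_sqrt hCS
    have := expand
    rw [hmean]
    linarith
end

section
/- Let d ≥ 1 be an integer, ρ > 0 a real number, and L : Fin d → ℝ a family of real numbers. For every vector q ∈ ℝ^d with Σ_a q_a = 1 and Σ_a (1/d)·(d·q_a − 1)² ≤ ρ, one has Σ_a q_a · L_a ≤ (1/d)·Σ_a L_a + sqrt(ρ · Var(L)). -/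
open Finset

theorem weighted_loss_le_mean_add_sqrt_var (d : ℕ) (hd : 1 ≤ d) (ρ : ℝ) (hρ : 0 < ρ)
    (L : Fin d → ℝ) (q : Fin d → ℝ) (hq1 : ∑ a, q a = 1)
    (hq2 : ∑ a, (1 / (d : ℝ)) * ((d : ℝ) * q a - 1) ^ 2 ≤ ρ) :
    ∑ a, q a * L a ≤ (1 / (d : ℝ)) * ∑ a, L a + Real.sqrt (ρ * famVar L) := by
  have hd0 : (0:ℝ) < (d:ℝ) := by exact_mod_cast Nat.lt_of_lt_of_le Nat.zero_lt_one hd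
  have hdne : (d:ℝ) ≠ 0 := ne_of_gt hd0
  set u : Fin d → ℝ := fun a => q a - 1 / d with hu
  set v : Fin d → ℝ := fun a => L a - famMean L with hv
  have hkey : ∑ a, q a * L a - (1 / (d:ℝ)) * ∑ a, L a = ∑ a, u a * v a := by
    have hcard : (Finset.univ : Finset (Fin d)).card = d := by simp
    simp only [hu, hv, famMean, sub_mul, mul_sub, Finset.sum_sub_distrib]
    rw [← Finset.sum_mul, ← Finset.mul_sum, hq1, Finset.sum_const, hcard]
    field_simp
    rw [nsmul_eq_mul]
    have hS : (d:ℝ) * ((d:ℝ) * ((∑ a, L a) / (d:ℝ) ^ 2)) = ∑ a, L a := by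
      rw [← mul_assoc, ← sq, mul_div_assoc', mul_div_cancel_left₀ _ (pow_ne_zero 2 hdne)]
    rw [hS]
    ring
  have hUsum : ∑ a, u a ^ 2 ≤ ρ / d := by
    have : ∀ a, u a ^ 2 = (1/(d:ℝ)) * ((1 / (d:ℝ)) * ((d:ℝ) * q a - 1) ^ 2) := by
      intro a; simp only [hu]; field_simp
    calc ∑ a, u a ^ 2 = (1/(d:ℝ)) * ∑ a, (1 / (d:ℝ)) * ((d:ℝ) * q a - 1) ^ 2 := by
          rw [Finset.mul_sum]; exact Finset.sum_congr rfl fun a _ => this a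
      _ ≤ (1/(d:ℝ)) * ρ := by
          apply mul_le_mul_of_nonneg_left hq2 (by positivity)
      _ = ρ / d := by ring
  have hVsum : ∑ a, v a ^ 2 = (d:ℝ) * famVar L := by
    simp only [famVar, hv]; field_simp
  have hUnn : (0:ℝ) ≤ ∑ a, u a ^ 2 := Finset.sum_nonneg fun a _ => sq_nonneg _
  have hVnn : (0:ℝ) ≤ ∑ a, v a ^ 2 := Finset.sum_nonneg fun a _ => sq_nonneg _
  have hcs : (∑ a, u a * v a) ^ 2 ≤ (∑ a, u a ^ 2) * (∑ a, v a ^ 2) := by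
    simpa [pow_two, mul_comm] using sum_mul_sq_le_sq_mul_sq Finset.univ u v
  have hbound : (∑ a, u a * v a) ^ 2 ≤ ρ * famVar L := by
    calc (∑ a, u a * v a) ^ 2 ≤ (∑ a, u a ^ 2) * (∑ a, v a ^ 2) := hcs
      _ ≤ (ρ / d) * ((d:ℝ) * famVar L) := by
          apply mul_le_mul hUsum (le_of_eq hVsum) hVnn (by positivity)
      _ = ρ * famVar L := by field_simp
  have hfin : ∑ a, u a * v a ≤ Real.sqrt (ρ * famVar L) :=
    calc ∑ a, u a * v a ≤ |∑ a, u a * v a| := le_abs_self _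
      _ = Real.sqrt ((∑ a, u a * v a) ^ 2) := (Real.sqrt_sq_eq_abs _).symm
      _ ≤ Real.sqrt (ρ * famVar L) := Real.sqrt_le_sqrt hbound
  linarith [hkey, hfin]
end

section
/- Let d ≥ 1 be an integer, ρ > 0 a real number, and L : Fin d → ℝ a family of real numbers with Var(L) > 0. If q ∈ ℝ^d satisfies Σ_a q_a = 1, Σ_a (1/d)·(d·q_a − 1)² ≤ ρ, and Σ_a q_a · L_a = (1/d)·Σ_a L_a + sqrt(ρ · Var(L)), then q = q*, where q*_a = 1/d + sqrt(ρ/d) · (L_a − L̄) / sqrt(Σ_b (L_b − L̄)²). In other words, when the groupwise losses are not all equal, the maximizer over the uncertainty set Q_ρ is unique and given by this closed-form solution. -/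
open Finset

/-- The closed-form maximizer over the χ²-divergence uncertainty set. -/
noncomputable def qStar {d : ℕ} (ρ : ℝ) (L : Fin d → ℝ) : Fin d → ℝ := fun a =>
  1 / (d : ℝ) + Real.sqrt (ρ / (d : ℝ)) * (L a - famMean L) /
    Real.sqrt (∑ b, (L b - famMean L) ^ 2)

theorem maximizer_unique (d : ℕ) (hd : 1 ≤ d) (ρ : ℝ) (hρ : 0 < ρ)
    (L : Fin d → ℝ) (hV : 0 < famVar L) (q : Fin d → ℝ)
    (hq1 : ∑ a, q a = 1)
    (hq2 : ∑ a, (1 / (d : ℝ)) * ((d : ℝ) * q a - 1) ^ 2 ≤ ρ)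
    (hmax : ∑ a, q a * L a = (1 / (d : ℝ)) * ∑ a, L a + Real.sqrt (ρ * famVar L)) :
    q = qStar ρ L := by
  have hd0 : (0:ℝ) < d := by exact_mod_cast Nat.lt_of_lt_of_le Nat.zero_lt_one hd
  have hdne : (d:ℝ) ≠ 0 := ne_of_gt hd0
  set m := famMean L with hm
  set c : Fin d → ℝ := fun a => L a - m with hc
  set u : Fin d → ℝ := fun a => q a - 1/(d:ℝ) with hu
  have hS2pos : (0:ℝ) < ∑ b, c b ^ 2 := by
    have hV' : famVar L = (1/(d:ℝ)) * ∑ b, c b ^ 2 := rfl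
    have h1d : (0:ℝ) < 1/(d:ℝ) := by positivity
    rw [hV'] at hV
    nlinarith [hV, h1d]
  set S := Real.sqrt (∑ b, c b ^ 2) with hS
  have hSpos : 0 < S := Real.sqrt_pos.mpr hS2pos
  have hSne : S ≠ 0 := ne_of_gt hSpos
  have hSsq : S ^ 2 = ∑ b, c b ^ 2 := Real.sq_sqrt hS2pos.le
  set r := Real.sqrt (ρ / (d:ℝ)) with hr
  have hrsq : r ^ 2 = ρ / (d:ℝ) := Real.sq_sqrt (div_nonneg hρ.le hd0.le)
  -- mean fact
  have hmean : (1/(d:ℝ)) * ∑ a, L a = m := rfl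
  -- Σ u c = sqrt(ρ Var)
  have huc : ∑ a, u a * c a = Real.sqrt (ρ * famVar L) := by
    have h1 : ∑ a, u a * c a
        = (∑ a, q a * L a) - m * (∑ a, q a) - (1/(d:ℝ)) * (∑ a, L a)
          + (d:ℝ) * ((1/(d:ℝ)) * m) := by
      simp only [hu, hc, Finset.mul_sum]
      rw [← Finset.sum_sub_distrib, ← Finset.sum_sub_distrib,
        show ((d:ℝ) * ((1/(d:ℝ)) * m)) = ∑ _a : Fin d, (1/(d:ℝ)) * m by
          simp [Finset.sum_const, Fintype.card_fin, nsmul_eq_mul],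
        ← Finset.sum_add_distrib]
      exact Finset.sum_congr rfl fun a _ => by ring
    have hdm : (d:ℝ) * ((1/(d:ℝ)) * m) = m := by field_simp
    rw [h1, hq1, hmax, hmean, hdm]
    ring
  -- sqrt(ρ Var) = r * S
  have hsqrt : Real.sqrt (ρ * famVar L) = r * S := by
    have : ρ * famVar L = (ρ / (d:ℝ)) * ∑ b, c b ^ 2 := by
      have hV' : famVar L = (1/(d:ℝ)) * ∑ b, c b ^ 2 := rfl
      rw [hV']; field_simp
    rw [this, Real.sqrt_mul (div_nonneg hρ.le hd0.le)]
  -- Σ u² ≤ ρ/d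
  have hu2 : ∑ a, u a ^ 2 ≤ ρ / (d:ℝ) := by
    have hterm : ∀ a, (1/(d:ℝ)) * ((d:ℝ) * q a - 1) ^ 2 = (d:ℝ) * u a ^ 2 := by
      intro a; simp only [hu]; field_simp
    have h2 : (d:ℝ) * ∑ a, u a ^ 2 ≤ ρ := by
      rw [Finset.mul_sum]
      calc ∑ a, (d:ℝ) * u a ^ 2 = ∑ a, (1/(d:ℝ)) * ((d:ℝ) * q a - 1) ^ 2 :=
            Finset.sum_congr rfl fun a _ => (hterm a).symm
        _ ≤ ρ := hq2
    rw [div_eq_inv_mul, ← div_eq_inv_mul, le_div_iff₀ hd0]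
    linarith [h2]
  -- qStar in terms of u, c
  have hqs : ∀ a, qStar ρ L a = 1/(d:ℝ) + (r / S) * c a := by
    intro a
    simp only [qStar, hc, hr, hS, ← hm]
    ring
  -- key: sum of squares ≤ 0
  have key : ∑ a, (q a - qStar ρ L a) ^ 2 ≤ 0 := by
    have hexp : ∑ a, (q a - qStar ρ L a) ^ 2
        = (∑ a, u a ^ 2) - 2 * (r / S) * (∑ a, u a * c a)
          + (r / S) ^ 2 * (∑ a, c a ^ 2) := by
      simp only [Finset.mul_sum]
      rw [← Finset.sum_sub_distrib, ← Finset.sum_add_distrib]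
      refine Finset.sum_congr rfl fun a _ => ?_
      rw [hqs a]
      simp only [hu]
      ring
    rw [hexp, huc, hsqrt, ← hSsq]
    have e1 : 2 * (r / S) * (r * S) = 2 * r ^ 2 := by field_simp
    have e2 : (r / S) ^ 2 * S ^ 2 = r ^ 2 := by field_simp
    rw [e1, e2, hrsq]
    linarith [hu2]
  have hzero : ∀ a ∈ (Finset.univ : Finset (Fin d)), (q a - qStar ρ L a) ^ 2 = 0 := by
    have hnn : ∀ a ∈ (Finset.univ : Finset (Fin d)), (0:ℝ) ≤ (q a - qStar ρ L a) ^ 2 :=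
      fun a _ => sq_nonneg _
    exact (Finset.sum_eq_zero_iff_of_nonneg hnn).mp
      (le_antisymm key (Finset.sum_nonneg hnn))
  funext a
  have := hzero a (Finset.mem_univ a)
  have := pow_eq_zero_iff (n := 2) (by norm_num) |>.mp this
  linarith [this]
end

section
/- Let C ≥ 1 and d ≥ 1 be integers, ρ > 0 a real number, and L : Fin C × Fin d → ℝ a family of real numbers (the classwise-groupwise empirical losses, indexed by class y and group a). Then the classwise-DRO objective F(L) := (1/C) · Σ_{y} sSup { Σ_a q_a · L(y,a) : q ∈ Q_ρ } satisfies the identity F(L) = (1/(C·d)) · Σ_{y,a} L(y,a) + (sqrt(ρ)/C) · Σ_y sqrt(Var(L(y,·))), where Var(L(y,·)) denotes the variance of the d losses of class y over groups. -/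
open Finset

/-- The classwise-DRO objective. -/
noncomputable def classwiseDRO {C d : ℕ} (ρ : ℝ) (L : Fin C × Fin d → ℝ) : ℝ :=
  (1 / (C : ℝ)) *
    ∑ y : Fin C, sSup {v : ℝ | ∃ q ∈ uncertaintySet d ρ, v = ∑ a, q a * L (y, a)}

lemma sup_lin (d : ℕ) (hd : 1 ≤ d) (ρ : ℝ) (hρ : 0 < ρ) (x : Fin d → ℝ) :
    sSup {v : ℝ | ∃ q ∈ uncertaintySet d ρ, v = ∑ a, q a * x a} =
      famMean x + Real.sqrt ρ * Real.sqrt (famVar x) := by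
  have hd0 : (d : ℝ) ≠ 0 := by positivity
  have hdpos : (0:ℝ) < d := by positivity
  set m := famMean x with hm
  set V := famVar x with hV
  have hsumx : ∑ a, x a = d * m := by
    rw [hm, famMean]; field_simp
  have hsum0 : ∑ a, (x a - m) = 0 := by
    rw [Finset.sum_sub_distrib, hsumx]; simp [mul_comm]
  have hsumsq : ∑ a, (x a - m) ^ 2 = d * V := by
    rw [hV, famVar]; field_simp; rw [hm]
  have hVnn : 0 ≤ V := by
    rw [hV, famVar]; positivity
  -- the claimed supremum is attained
  have hmem : (m + Real.sqrt ρ * Real.sqrt V) ∈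
      {v : ℝ | ∃ q ∈ uncertaintySet d ρ, v = ∑ a, q a * x a} := by
    rcases eq_or_lt_of_le hVnn with hV0 | hVpos
    · -- V = 0 : uniform q works
      refine ⟨fun _ => 1 / d, ⟨by field_simp; simp [hd0], ?_⟩, ?_⟩
      · simp [hd0]; positivity
      · have hx : ∀ a, x a = m := by
          intro a
          have h : ∑ a, (x a - m) ^ 2 = 0 := by rw [hsumsq, ← hV0]; ring
          have := (Finset.sum_eq_zero_iff_of_nonneg
            (fun i _ => sq_nonneg (x i - m))).1 h a (Finset.mem_univ a)
          nlinarith [this]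
        simp [hx, ← hV0, ← Finset.sum_mul]
        field_simp
    · -- V > 0 : optimal q
      set c : ℝ := Real.sqrt ρ / Real.sqrt V with hc
      have hsV : (0:ℝ) < Real.sqrt V := Real.sqrt_pos.2 hVpos
      refine ⟨fun a => (1 + c * (x a - m)) / d, ⟨?_, ?_⟩, ?_⟩
      · rw [← Finset.sum_div]
        rw [Finset.sum_add_distrib, ← Finset.mul_sum, hsum0]
        simp [hd0]
      · have hterm : ∀ a, (1 / (d:ℝ)) * ((d:ℝ) * ((1 + c * (x a - m)) / d) - 1) ^ 2
            = (1/d) * c ^ 2 * (x a - m) ^ 2 := by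
          intro a; field_simp; ring
        rw [Finset.sum_congr rfl fun a _ => hterm a, ← Finset.mul_sum, hsumsq]
        have hc2 : c ^ 2 = ρ / V := by
          rw [hc, div_pow, Real.sq_sqrt hρ.le, Real.sq_sqrt hVnn]
        rw [hc2]; field_simp; exact le_rfl
      · have : ∑ a, (1 + c * (x a - m)) / d * x a
            = (1/d) * (∑ a, x a) + (c/d) * ∑ a, (x a - m) * x a := by
          rw [Finset.mul_sum, Finset.mul_sum, ← Finset.sum_add_distrib]
          exact Finset.sum_congr rfl fun a _ => by ring
        rw [this, hsumx]
        have h2 : ∑ a, (x a - m) * x a = ∑ a, (x a - m) ^ 2 + m * ∑ a, (x a - m) := by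
          rw [Finset.mul_sum, ← Finset.sum_add_distrib]
          exact Finset.sum_congr rfl fun a _ => by ring
        rw [h2, hsum0, hsumsq]
        have hVV : Real.sqrt V * Real.sqrt V = V := Real.mul_self_sqrt hVnn
        have hcv : c * V = Real.sqrt ρ * Real.sqrt V := by
          rw [hc]; field_simp; rw [Real.sq_sqrt hVnn]
        rw [← hcv]; field_simp; ring
  -- upper bound
  have hub : ∀ v ∈ {v : ℝ | ∃ q ∈ uncertaintySet d ρ, v = ∑ a, q a * x a},
      v ≤ m + Real.sqrt ρ * Real.sqrt V := by
    rintro v ⟨q, ⟨hq1, hq2⟩, rfl⟩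
    set p : Fin d → ℝ := fun a => (d:ℝ) * q a - 1 with hp
    have hqp : ∀ a, q a = (1 + p a) / d := by intro a; rw [hp]; field_simp; ring
    have hpsq : ∑ a, p a ^ 2 ≤ d * ρ := by
      have := hq2
      rw [← Finset.mul_sum] at this
      calc ∑ a, p a ^ 2 = d * ((1/(d:ℝ)) * ∑ a, p a ^ 2) := by field_simp
        _ ≤ d * ρ := by
            apply mul_le_mul_of_nonneg_left _ hdpos.le
            simpa [hp] using this
    have hval : ∑ a, q a * x a = m + (1/d) * ∑ a, p a * (x a - m) := by
      have : ∑ a, q a * x a = (1/d) * (∑ a, x a) + (1/d) * ∑ a, p a * x a := by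
        rw [Finset.mul_sum, Finset.mul_sum, ← Finset.sum_add_distrib]
        exact Finset.sum_congr rfl fun a _ => by rw [hqp a]; field_simp
      rw [this, hsumx]
      have hps : ∑ a, p a = 0 := by
        have : ∑ a, q a = ∑ a, (1 + p a) / d := Finset.sum_congr rfl fun a _ => hqp a
        rw [hq1] at this
        rw [← Finset.sum_div, Finset.sum_add_distrib] at this
        simp at this
        field_simp at this
        linarith [this]
      have : ∑ a, p a * (x a - m) = ∑ a, p a * x a - m * ∑ a, p a := by
        rw [Finset.mul_sum, ← Finset.sum_sub_distrib]
        exact Finset.sum_congr rfl fun a _ => by ring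
      rw [this, hps]
      field_simp; ring
    rw [hval]
    have hcs : ∑ a, p a * (x a - m) ≤
        Real.sqrt (∑ a, p a ^ 2) * Real.sqrt (∑ a, (x a - m) ^ 2) :=
      Real.sum_mul_le_sqrt_mul_sqrt _ _ _
    have h1 : Real.sqrt (∑ a, p a ^ 2) ≤ Real.sqrt (d * ρ) := Real.sqrt_le_sqrt hpsq
    have h2 : Real.sqrt (∑ a, (x a - m) ^ 2) = Real.sqrt (d * V) := by rw [hsumsq]
    have hbound : ∑ a, p a * (x a - m) ≤ Real.sqrt (d * ρ) * Real.sqrt (d * V) := by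
      calc ∑ a, p a * (x a - m) ≤ _ := hcs
        _ ≤ Real.sqrt (d * ρ) * Real.sqrt (d * V) := by
            rw [h2]; exact mul_le_mul_of_nonneg_right h1 (Real.sqrt_nonneg _)
    have hprod : Real.sqrt (d * ρ) * Real.sqrt (d * V)
        = d * (Real.sqrt ρ * Real.sqrt V) := by
      rw [Real.sqrt_mul hdpos.le, Real.sqrt_mul hdpos.le]
      have hdd : Real.sqrt d * Real.sqrt d = (d:ℝ) := Real.mul_self_sqrt hdpos.le
      linear_combination (Real.sqrt ρ * Real.sqrt V) * hdd
    rw [hprod] at hbound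
    have : (1/(d:ℝ)) * ∑ a, p a * (x a - m) ≤ Real.sqrt ρ * Real.sqrt V := by
      rw [div_mul_eq_mul_div, one_mul, div_le_iff₀ hdpos]
      linarith [hbound]
    linarith
  exact csSup_eq_of_forall_le_of_forall_lt_exists_gt ⟨_, hmem⟩ hub
    (fun w hw => ⟨_, hmem, hw⟩)

theorem classwiseDRO_eq_balanced_loss_add_var_reg (C d : ℕ) (hC : 1 ≤ C) (hd : 1 ≤ d)
    (ρ : ℝ) (hρ : 0 < ρ) (L : Fin C × Fin d → ℝ) :
    classwiseDRO ρ L =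
      (1 / ((C : ℝ) * (d : ℝ))) * ∑ y : Fin C, ∑ a : Fin d, L (y, a) +
        (Real.sqrt ρ / (C : ℝ)) * ∑ y : Fin C, Real.sqrt (famVar fun a => L (y, a)) := by
  unfold classwiseDRO
  rw [Finset.sum_congr rfl fun y _ => sup_lin d hd ρ hρ (fun a => L (y, a))]
  rw [Finset.sum_add_distrib, mul_add]
  congr 1
  · rw [Finset.mul_sum, Finset.mul_sum]
    exact Finset.sum_congr rfl fun y _ => by rw [famMean]; ring
  · rw [← Finset.mul_sum]; ring
end
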